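/- Let G be a cocomparability graph with umbrella-free ordering σ, and let (P_1, …, P_p) and (U_1, …, U_p) be given by the recursive partition-class construction. Then there exists an ordering τ of V such that: (i) τ satisfies the LexDFS 4-point condition; (ii) τ is umbrella-free; (iii) τ respects the class order (x ∈ P_i, y ∈ P_j, i < j implies x ≺_τ y); and (iv) for every i and every pair of vertices u, v ∈ P_i whose neighbourhoods in the earlier classes coincide, i.e., {z ∈ V \ U_i : uz ∈ E} = {z ∈ V \ U_i : vz ∈ E}, if u ≺_σ v then v ≺_τ u. In particular, the first vertex of τ is the last vertex of σ. -/
import Mathlib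

/-- `σ` is an umbrella-free (cocomparability) ordering of `G`. -/
def UmbrellaFree {V : Type*} {n : ℕ} (G : SimpleGraph V) (σ : Fin n ≃ V) : Prop :=
  ∀ i j k : Fin n, i < j → j < k → G.Adj (σ i) (σ k) →
    G.Adj (σ i) (σ j) ∨ G.Adj (σ j) (σ k)

/-- `#*(v)`: the number of non-neighbours of `v` occurring after `v` in `σ`. -/
def hashStar {V : Type*} [Fintype V] {n : ℕ} (G : SimpleGraph V) [DecidableRel G.Adj]
    (σ : Fin n ≃ V) (v : V) : ℕ :=
  (Finset.univ.filter (fun w => ¬ G.Adj v w ∧ σ.symm v < σ.symm w)).card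

/-- The label `#_i(v) = #*(v) + |{z ∈ V \ U_i : vz ∈ E}|`, where `U` is the set of
still-unvisited vertices at step `i`. -/
def hashAt {V : Type*} [Fintype V] [DecidableEq V] {n : ℕ} (G : SimpleGraph V)
    [DecidableRel G.Adj] (σ : Fin n ≃ V) (U : Finset V) (v : V) : ℕ :=
  hashStar G σ v + (Finset.univ.filter (fun z => z ∉ U ∧ G.Adj v z)).card

/-- The partition class extracted from the unvisited set `U`: the vertices of `U`
whose `#` label is minimum over `U`. -/
def Pclass {V : Type*} [Fintype V] [DecidableEq V] {n : ℕ} (G : SimpleGraph V)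
    [DecidableRel G.Adj] (σ : Fin n ≃ V) (U : Finset V) : Finset V :=
  U.filter (fun v => ∀ u ∈ U, hashAt G σ U v ≤ hashAt G σ U u)

/-- `Uset G σ i` is the set `U_{i+1}` of vertices still unvisited after the first
`i` partition classes have been removed (0-indexed, so `Uset G σ 0 = U_1 = V`,
and `P_{i+1} = Pclass G σ (Uset G σ i)`). -/
def Uset {V : Type*} [Fintype V] [DecidableEq V] {n : ℕ} (G : SimpleGraph V)
    [DecidableRel G.Adj] (σ : Fin n ≃ V) : ℕ → Finset V
  | 0 => Finset.univ
  | i + 1 => Uset G σ i \ Pclass G σ (Uset G σ i)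

/-- The strict order `<_P` on vertices: `x <_P y` iff `x` precedes `y` in `σ` and
`xy` is a non-edge of `G` (the corresponding poset of the complement). -/
def ltP {V : Type*} {n : ℕ} (G : SimpleGraph V) (σ : Fin n ≃ V) (x y : V) : Prop :=
  σ.symm x < σ.symm y ∧ ¬ G.Adj x y

/-- The LexDFS 4-point condition for the ordering `τ` of `G`. -/
def FourPointLexDFS {V : Type*} {n : ℕ} (G : SimpleGraph V) (τ : Fin n ≃ V) : Prop :=
  ∀ i j k : Fin n, i < j → j < k → G.Adj (τ i) (τ k) → ¬ G.Adj (τ i) (τ j) →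
    ∃ d : Fin n, i < d ∧ d < j ∧ G.Adj (τ d) (τ j) ∧ ¬ G.Adj (τ d) (τ k)

namespace LexDFSAux

open Finset

/-! ### Binary sum lemmas -/

theorem bsum_lt_pow (p : ℕ → Prop) [DecidablePred p] (t : ℕ) :
    (∑ s ∈ Finset.range t, if p s then 2^s else 0) < 2^t := by
  induction t with
  | zero => simp
  | succ t ih =>
    rw [Finset.sum_range_succ, pow_succ]
    have h : (if p t then 2^t else 0) ≤ 2^t := by split <;> omega
    omega

theorem bsum_eq_iff {p q : ℕ → Prop} [DecidablePred p] [DecidablePred q] :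
    ∀ t, (∑ s ∈ Finset.range t, if p s then 2^s else 0) =
      (∑ s ∈ Finset.range t, if q s then 2^s else 0) →
      ∀ s, s < t → (p s ↔ q s) := by
  intro t
  induction t with
  | zero => exact fun _ s hs => absurd hs (Nat.not_lt_zero s)
  | succ t ih =>
    intro h s hs
    rw [Finset.sum_range_succ, Finset.sum_range_succ] at h
    have hp := bsum_lt_pow p t
    have hq := bsum_lt_pow q t
    by_cases hpt : p t <;> by_cases hqt : q t
    · rw [if_pos hpt, if_pos hqt] at h
      have h' : (∑ s ∈ Finset.range t, if p s then 2^s else 0) =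
          (∑ s ∈ Finset.range t, if q s then 2^s else 0) := by omega
      rcases Nat.lt_succ_iff_lt_or_eq.mp hs with h1 | rfl
      exacts [ih h' s h1, iff_of_true hpt hqt]
    · rw [if_pos hpt, if_neg hqt] at h; omega
    · rw [if_neg hpt, if_pos hqt] at h; omega
    · rw [if_neg hpt, if_neg hqt] at h
      have h' : (∑ s ∈ Finset.range t, if p s then 2^s else 0) =
          (∑ s ∈ Finset.range t, if q s then 2^s else 0) := by omega
      rcases Nat.lt_succ_iff_lt_or_eq.mp hs with h1 | rfl
      exacts [ih h' s h1, iff_of_false hpt hqt]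

theorem bsum_lt_exists {p q : ℕ → Prop} [DecidablePred p] [DecidablePred q] :
    ∀ t, (∑ s ∈ Finset.range t, if p s then 2^s else 0) <
      (∑ s ∈ Finset.range t, if q s then 2^s else 0) →
      ∃ s, s < t ∧ q s ∧ ¬ p s ∧ ∀ s', s < s' → s' < t → (p s' ↔ q s') := by
  intro t
  induction t with
  | zero => simp
  | succ t ih =>
    intro h
    rw [Finset.sum_range_succ, Finset.sum_range_succ] at h
    have hp := bsum_lt_pow p t
    have hq := bsum_lt_pow q t
    by_cases hpt : p t <;> by_cases hqt : q t
    · rw [if_pos hpt, if_pos hqt] at h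
      have h' : (∑ s ∈ Finset.range t, if p s then 2^s else 0) <
          (∑ s ∈ Finset.range t, if q s then 2^s else 0) := by omega
      obtain ⟨s, hs, h1, h2, h3⟩ := ih h'
      refine ⟨s, by omega, h1, h2, fun s' hss' hs' => ?_⟩
      rcases Nat.lt_succ_iff_lt_or_eq.mp hs' with h4 | rfl
      exacts [h3 s' hss' h4, iff_of_true hpt hqt]
    · rw [if_pos hpt, if_neg hqt] at h; omega
    · rw [if_neg hpt, if_pos hqt] at h
      exact ⟨t, Nat.lt_succ_self t, hqt, hpt, fun s' hss' hs' => by omega⟩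
    · rw [if_neg hpt, if_neg hqt] at h
      have h' : (∑ s ∈ Finset.range t, if p s then 2^s else 0) <
          (∑ s ∈ Finset.range t, if q s then 2^s else 0) := by omega
      obtain ⟨s, hs, h1, h2, h3⟩ := ih h'
      refine ⟨s, by omega, h1, h2, fun s' hss' hs' => ?_⟩
      rcases Nat.lt_succ_iff_lt_or_eq.mp hs' with h4 | rfl
      exacts [h3 s' hss' h4, iff_of_false hpt hqt]

theorem bsum_lt_exists' {p q : ℕ → Prop} [DecidablePred p] [DecidablePred q] (t : ℕ)
    (h : (∑ s ∈ Finset.range t, if p s then 2^s else 0) <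
      (∑ s ∈ Finset.range t, if q s then 2^s else 0)) :
    ∃ s, s < t ∧ q s ∧ ¬ p s := by
  obtain ⟨s, hs, h1, h2, _⟩ := bsum_lt_exists t h
  exact ⟨s, hs, h1, h2⟩

theorem key_arith {a b c d n : ℕ} (hb : b < n) (hd : d < n) (h : a * n + b < c * n + d) :
    a < c ∨ (a = c ∧ b < d) := by
  rcases Nat.lt_trichotomy a c with h1 | rfl | h1
  · exact Or.inl h1
  · exact Or.inr ⟨rfl, by omega⟩
  · exfalso
    have h2 : (c + 1) * n ≤ a * n := Nat.mul_le_mul_right n h1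
    rw [add_mul, one_mul] at h2
    omega

theorem key_arith_eq {a b c d n : ℕ} (hb : b < n) (hd : d < n) (h : a * n + b = c * n + d) :
    a = c ∧ b = d := by
  have h2 : (n * a + b) % n = (n * c + d) % n := by rw [mul_comm n a, mul_comm n c, h]
  rw [Nat.mul_add_mod, Nat.mul_add_mod, Nat.mod_eq_of_lt hb, Nat.mod_eq_of_lt hd] at h2
  subst h2
  have h3 : a * n = c * n := by omega
  exact ⟨Nat.eq_of_mul_eq_mul_right (by omega) h3, rfl⟩

end LexDFSAux
section Construction

open Finset

variable {V : Type*} [Fintype V] [DecidableEq V] (G : SimpleGraph V) [DecidableRel G.Adj]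
  {n : ℕ} (σ : Fin n ≃ V) [Nonempty V]

/-- the lexicographic key of `v` relative to the list `L` of already-visited
vertices (oldest first), encoded as a natural number. -/
def keyf (L : List V) (v : V) : ℕ :=
  (∑ s ∈ Finset.range L.length, if G.Adj (L.getD s v) v then 2^s else 0) * n + (σ.symm v : ℕ)

/-- pick the unvisited vertex with maximal key. -/
noncomputable def pick (L : List V) : V :=
  if h : (Finset.univ \ L.toFinset).Nonempty then
    (Finset.exists_max_image (Finset.univ \ L.toFinset) (keyf G σ L) h).choose
  else Classical.arbitrary V

/-- the list of visited vertices (oldest first). -/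
noncomputable def chain : ℕ → List V
  | 0 => []
  | t + 1 => chain t ++ [pick G σ (chain t)]

/-- the LexDFS⁺ visit sequence. -/
noncomputable def seq (t : ℕ) : V := pick G σ (chain G σ t)

/-- the set of vertices visited before time `t`. -/
noncomputable def Wt (t : ℕ) : Finset V := (chain G σ t).toFinset

theorem chain_length (t : ℕ) : (chain G σ t).length = t := by
  induction t with
  | zero => rfl
  | succ t ih => simp [chain, ih]

theorem chain_getD {s t : ℕ} (h : s < t) (x : V) : (chain G σ t).getD s x = seq G σ s := by
  induction t with
  | zero => omega
  | succ t ih =>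
    rcases Nat.lt_succ_iff_lt_or_eq.mp h with h1 | rfl
    · rw [show chain G σ (t+1) = chain G σ t ++ [pick G σ (chain G σ t)] from rfl,
        List.getD_append _ _ _ _ (by rw [chain_length]; exact h1)]
      exact ih h1
    · rw [show chain G σ (s+1) = chain G σ s ++ [pick G σ (chain G σ s)] from rfl,
        List.getD_append_right _ _ _ _ (by rw [chain_length])]
      simp [chain_length, seq, List.getD]

theorem mem_Wt {v : V} {t : ℕ} : v ∈ Wt G σ t ↔ ∃ s, s < t ∧ seq G σ s = v := by
  rw [Wt, List.mem_toFinset]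
  induction t with
  | zero => simp [chain]
  | succ t ih =>
    rw [show chain G σ (t+1) = chain G σ t ++ [pick G σ (chain G σ t)] from rfl]
    simp only [List.mem_append, List.mem_singleton, ih]
    constructor
    · rintro (⟨s, hs, rfl⟩ | rfl)
      · exact ⟨s, by omega, rfl⟩
      · exact ⟨t, by omega, rfl⟩
    · rintro ⟨s, hs, rfl⟩
      rcases Nat.lt_succ_iff_lt_or_eq.mp hs with h1 | rfl
      · exact Or.inl ⟨s, h1, rfl⟩
      · exact Or.inr rfl

theorem card_V' {W : Type*} [Fintype W] {m : ℕ} (e : Fin m ≃ W) : Fintype.card W = m := by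
  rw [← Fintype.card_fin m]; exact Fintype.card_congr e.symm

theorem compl_nonempty {t : ℕ} (h : t < n) : (Finset.univ \ Wt G σ t).Nonempty := by
  rw [← Finset.card_pos, Finset.card_sdiff_of_subset (Finset.subset_univ _), Finset.card_univ, card_V' σ]
  have h2 : (Wt G σ t).card ≤ t := by
    rw [Wt]
    exact le_trans (List.toFinset_card_le _) (le_of_eq (chain_length G σ t))
  omega

theorem pick_spec {t : ℕ} (h : t < n) :
    seq G σ t ∉ Wt G σ t ∧
      ∀ u, u ∉ Wt G σ t → keyf G σ (chain G σ t) u ≤ keyf G σ (chain G σ t) (seq G σ t) := by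
  have hne := compl_nonempty G σ h
  rw [Wt] at hne
  have hspec := (Finset.exists_max_image (Finset.univ \ (chain G σ t).toFinset)
    (keyf G σ (chain G σ t)) hne).choose_spec
  have hseq : seq G σ t = (Finset.exists_max_image (Finset.univ \ (chain G σ t).toFinset)
      (keyf G σ (chain G σ t)) hne).choose := by
    rw [seq, pick, dif_pos hne]
  rw [Wt, hseq]
  refine ⟨fun hmem => ?_, fun u hu => hspec.2 u (Finset.mem_sdiff.mpr ⟨Finset.mem_univ _, ?_⟩)⟩
  · exact (Finset.mem_sdiff.mp hspec.1).2 hmem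
  · exact hu

theorem seq_notMem {t : ℕ} (h : t < n) : seq G σ t ∉ Wt G σ t := (pick_spec G σ h).1

theorem seq_mem {s t : ℕ} (h : s < t) : seq G σ s ∈ Wt G σ t := (mem_Wt G σ).mpr ⟨s, h, rfl⟩

theorem seq_injOn {s t : ℕ} (hs : s < n) (ht : t < n) (h : seq G σ s = seq G σ t) : s = t := by
  by_contra hne
  rcases Nat.lt_or_ge s t with h1 | h1
  · exact seq_notMem G σ ht (h ▸ seq_mem G σ h1)
  · have h2 : t < s := by omega
    exact seq_notMem G σ hs (h ▸ seq_mem G σ h2)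

theorem card_Wt {t : ℕ} (h : t ≤ n) : (Wt G σ t).card = t := by
  induction t with
  | zero => simp [Wt, chain]
  | succ t ih =>
    have h1 : t < n := h
    have h2 : Wt G σ (t+1) = insert (seq G σ t) (Wt G σ t) := by
      rw [Wt, show chain G σ (t+1) = chain G σ t ++ [pick G σ (chain G σ t)] from rfl,
        List.toFinset_append]
      rw [Finset.insert_eq, Finset.union_comm]
      simp [Wt, seq]
    rw [h2, Finset.card_insert_of_notMem (seq_notMem G σ h1), ih (le_of_lt h1)]

theorem Wt_univ : Wt G σ n = Finset.univ := by
  apply Finset.eq_univ_of_card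
  rw [card_Wt G σ le_rfl]
  exact (card_V' σ).symm

theorem seq_surj (v : V) : ∃ s, s < n ∧ seq G σ s = v :=
  (mem_Wt G σ).mp (by rw [Wt_univ]; exact Finset.mem_univ v)

/-- the numeric value of `v`'s label at time `t`. -/
noncomputable def keyval (t : ℕ) (v : V) : ℕ := ∑ s ∈ Finset.range t, if G.Adj (seq G σ s) v then 2^s else 0

theorem keyf_eq (t : ℕ) (v : V) :
    keyf G σ (chain G σ t) v = keyval G σ t v * n + (σ.symm v : ℕ) := by
  rw [keyf, keyval, chain_length]
  congr 1
  refine congrArg (· * n) (Finset.sum_congr rfl fun s hs => ?_)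
  rw [chain_getD G σ (Finset.mem_range.mp hs)]

/-- Core selection property: the chosen vertex has the largest key. -/
theorem sel {t : ℕ} (ht : t < n) {u : V} (hu : u ∉ Wt G σ t) (hne : u ≠ seq G σ t) :
    keyval G σ t u * n + (σ.symm u : ℕ) <
      keyval G σ t (seq G σ t) * n + (σ.symm (seq G σ t) : ℕ) := by
  have h1 := (pick_spec G σ ht).2 u hu
  rw [keyf_eq, keyf_eq] at h1
  rcases lt_or_eq_of_le h1 with h2 | h2
  · exact h2
  · exfalso
    obtain ⟨-, h4⟩ := LexDFSAux.key_arith_eq (Fin.is_lt _) (Fin.is_lt _) h2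
    exact hne (σ.symm.injective (Fin.val_injective h4))

/-- Dichotomy: an unvisited vertex either is lexicographically beaten,
or ties and has smaller `σ` position. -/
theorem dich {t : ℕ} (ht : t < n) {u : V} (hu : u ∉ Wt G σ t) (hne : u ≠ seq G σ t) :
    (∃ s, s < t ∧ G.Adj (seq G σ s) (seq G σ t) ∧ ¬ G.Adj (seq G σ s) u) ∨
      ((∀ s, s < t → (G.Adj (seq G σ s) u ↔ G.Adj (seq G σ s) (seq G σ t))) ∧
        (σ.symm u : ℕ) < (σ.symm (seq G σ t) : ℕ)) := by
  have h1 := sel G σ ht hu hne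
  rcases LexDFSAux.key_arith (Fin.is_lt _) (Fin.is_lt _) h1 with h2 | ⟨h2, h3⟩
  · exact Or.inl (LexDFSAux.bsum_lt_exists' t h2)
  · exact Or.inr ⟨LexDFSAux.bsum_eq_iff t h2, h3⟩

/-- Beats: full lexicographic comparison, giving a more recent witness. -/
theorem beats {t : ℕ} (ht : t < n) {u : V} (hu : u ∉ Wt G σ t) (hne : u ≠ seq G σ t)
    {s : ℕ} (hst : s < t) (ha : G.Adj (seq G σ s) u) (hna : ¬ G.Adj (seq G σ s) (seq G σ t)) :
    ∃ s', s < s' ∧ s' < t ∧ G.Adj (seq G σ s') (seq G σ t) ∧ ¬ G.Adj (seq G σ s') u := by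
  have h1 := sel G σ ht hu hne
  rcases LexDFSAux.key_arith (Fin.is_lt _) (Fin.is_lt _) h1 with h2 | ⟨h2, h3⟩
  · obtain ⟨s', hs', hq, hp, hagree⟩ := LexDFSAux.bsum_lt_exists t h2
    refine ⟨s', ?_, hs', hq, hp⟩
    rcases Nat.lt_trichotomy s s' with h4 | rfl | h4
    · exact h4
    · exact absurd ha hp
    · exact absurd ((hagree s h4 hst).mp ha) hna
  · exact absurd ((LexDFSAux.bsum_eq_iff t h2 s hst).mp ha) hna

end Construction
section Main

open Finset

variable {V : Type*} [Fintype V] [DecidableEq V] (G : SimpleGraph V) [DecidableRel G.Adj]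
  {n : ℕ} (σ : Fin n ≃ V) [Nonempty V]

/-- Non-adjacent pairs appear in `τ` in reverse `σ`-order. -/
theorem rev (hσ : UmbrellaFree G σ) :
    ∀ s j, s < j → j < n → ¬ G.Adj (seq G σ s) (seq G σ j) →
      σ.symm (seq G σ j) < σ.symm (seq G σ s) := by
  intro s
  induction s using Nat.strong_induction_on with
  | _ s ih =>
    intro j hsj hjn hna
    have hsn : s < n := lt_trans hsj hjn
    have hu : seq G σ j ∉ Wt G σ s := by
      intro hmem
      obtain ⟨s', hs', heq⟩ := (mem_Wt G σ).mp hmem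
      have := seq_injOn G σ (by omega) hjn heq
      omega
    have hne : seq G σ j ≠ seq G σ s := fun h => by
      have := seq_injOn G σ hjn hsn h; omega
    rcases dich G σ hsn hu hne with ⟨s₀, hs₀, hadj₀, hnadj₀⟩ | ⟨-, hlt⟩
    · have hIH : σ.symm (seq G σ j) < σ.symm (seq G σ s₀) :=
        ih s₀ hs₀ j (by omega) hjn hnadj₀
      by_contra hcon
      have hne2 : σ.symm (seq G σ s) ≠ σ.symm (seq G σ j) :=
        fun h => hne ((σ.symm.injective h).symm)
      have hlt2 : σ.symm (seq G σ s) < σ.symm (seq G σ j) :=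
        lt_of_le_of_ne (not_lt.mp hcon) hne2
      have humb := hσ (σ.symm (seq G σ s)) (σ.symm (seq G σ j)) (σ.symm (seq G σ s₀))
        hlt2 hIH (by simpa using hadj₀.symm)
      simp only [Equiv.apply_symm_apply] at humb
      rcases humb with h | h
      · exact hna h
      · exact hnadj₀ h.symm
    · exact Fin.lt_def.mpr hlt

/-- The visit order is umbrella-free. -/
theorem seq_umbrella (hσ : UmbrellaFree G σ) {i j k : ℕ} (hij : i < j) (hjk : j < k)
    (hkn : k < n) (hadj : G.Adj (seq G σ i) (seq G σ k)) :
    G.Adj (seq G σ i) (seq G σ j) ∨ G.Adj (seq G σ j) (seq G σ k) := by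
  by_contra h
  push_neg at h
  have h1 := rev G σ hσ j k hjk hkn h.2
  have h2 := rev G σ hσ i j hij (lt_trans hjk hkn) h.1
  have humb := hσ (σ.symm (seq G σ k)) (σ.symm (seq G σ j)) (σ.symm (seq G σ i))
    h1 h2 (by simpa using hadj.symm)
  simp only [Equiv.apply_symm_apply] at humb
  rcases humb with h3 | h3
  · exact h.2 h3.symm
  · exact h.1 h3.symm

/-- The visit order satisfies the LexDFS 4-point condition. -/
theorem seq_fourpoint {i j k : ℕ} (hij : i < j) (hjk : j < k) (hkn : k < n)
    (hadj : G.Adj (seq G σ i) (seq G σ k)) (hnadj : ¬ G.Adj (seq G σ i) (seq G σ j)) :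
    ∃ d, i < d ∧ d < j ∧ G.Adj (seq G σ d) (seq G σ j) ∧ ¬ G.Adj (seq G σ d) (seq G σ k) := by
  have hjn : j < n := lt_trans hjk hkn
  have hu : seq G σ k ∉ Wt G σ j := by
    intro hmem
    obtain ⟨s', hs', heq⟩ := (mem_Wt G σ).mp hmem
    have := seq_injOn G σ (by omega) hkn heq
    omega
  have hne : seq G σ k ≠ seq G σ j := fun h => by
    have := seq_injOn G σ hkn hjn h; omega
  exact beats G σ hjn hu hne hij hadj hnadj

/-- The counting identity: the visit time of a vertex equals its `#*` value plus the
number of its visited neighbours. -/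
theorem id_card (hσ : UmbrellaFree G σ) {t : ℕ} (ht : t < n) :
    t = hashStar G σ (seq G σ t) +
      ((Wt G σ t).filter (fun w => G.Adj (seq G σ t) w)).card := by
  have hc := card_Wt G σ (le_of_lt ht)
  have hsplit := Finset.card_filter_add_card_filter_not
    (s := Wt G σ t) (p := fun w => G.Adj (seq G σ t) w)
  have hneg : (Wt G σ t).filter (fun w => ¬ G.Adj (seq G σ t) w) =
      Finset.univ.filter (fun w => ¬ G.Adj (seq G σ t) w ∧
        σ.symm (seq G σ t) < σ.symm w) := by
    ext w
    simp only [Finset.mem_filter, Finset.mem_univ, true_and]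
    constructor
    · rintro ⟨hw, hna⟩
      obtain ⟨s, hs, rfl⟩ := (mem_Wt G σ).mp hw
      exact ⟨hna, rev G σ hσ s t hs ht (fun h => hna h.symm)⟩
    · rintro ⟨hna, hlt⟩
      obtain ⟨s, hsn, rfl⟩ := seq_surj G σ w
      refine ⟨(mem_Wt G σ).mpr ⟨s, ?_, rfl⟩, hna⟩
      rcases Nat.lt_trichotomy s t with h1 | rfl | h1
      · exact h1
      · exact absurd hlt (lt_irrefl _)
      · exact absurd hlt (asymm (rev G σ hσ t s h1 hsn hna))
  rw [hashStar, ← hneg]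
  omega

end Main
section Classes

open Finset

variable {V : Type*} [Fintype V] [DecidableEq V] (G : SimpleGraph V) [DecidableRel G.Adj]
  {n : ℕ} (σ : Fin n ≃ V)

theorem hashAt_eq_card (U : Finset V) (x : V) :
    hashAt G σ U x = (Finset.univ.filter (fun w =>
      (¬ G.Adj x w ∧ σ.symm x < σ.symm w) ∨ (w ∉ U ∧ G.Adj x w))).card := by
  rw [hashAt, hashStar, Finset.filter_or, Finset.card_union_of_disjoint]
  rw [Finset.disjoint_left]
  intro w hw1 hw2
  simp only [Finset.mem_filter] at hw1 hw2
  exact hw1.2.1 hw2.2.2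

/-- `#` strictly decreases along non-edges, in `σ`-order. -/
theorem km1 (hσ : UmbrellaFree G σ) {U : Finset V} {u v : V}
    (h1 : σ.symm u < σ.symm v) (h2 : ¬ G.Adj u v) :
    hashAt G σ U v < hashAt G σ U u := by
  rw [hashAt_eq_card, hashAt_eq_card]
  apply Finset.card_lt_card
  rw [Finset.ssubset_iff_of_subset ?sub]
  case sub =>
    intro w hw
    simp only [Finset.mem_filter, Finset.mem_univ, true_and] at hw ⊢
    rcases hw with ⟨hna, hlt⟩ | ⟨hU, ha⟩
    · refine Or.inl ⟨fun hA => ?_, lt_trans h1 hlt⟩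
      have humb := hσ (σ.symm u) (σ.symm v) (σ.symm w) h1 hlt (by simpa using hA)
      simp only [Equiv.apply_symm_apply] at humb
      rcases humb with h | h
      · exact h2 h
      · exact hna h
    · by_cases hA : G.Adj u w
      · exact Or.inr ⟨hU, hA⟩
      · rcases lt_trichotomy (σ.symm u) (σ.symm w) with hh | hh | hh
        · exact Or.inl ⟨hA, hh⟩
        · exact absurd (σ.symm.injective hh ▸ ha.symm) h2
        · have humb := hσ (σ.symm w) (σ.symm u) (σ.symm v) hh h1 (by simpa using ha.symm)
          simp only [Equiv.apply_symm_apply] at humb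
          rcases humb with h | h
          · exact absurd h.symm hA
          · exact absurd h h2
  refine ⟨v, ?_, ?_⟩
  · simp only [Finset.mem_filter, Finset.mem_univ, true_and]
    exact Or.inl ⟨h2, h1⟩
  · simp only [Finset.mem_filter, Finset.mem_univ, true_and]
    rintro (⟨-, hlt⟩ | ⟨-, ha⟩)
    · exact lt_irrefl _ hlt
    · exact G.irrefl ha

theorem Pclass_subset (U : Finset V) : Pclass G σ U ⊆ U := Finset.filter_subset _ _

theorem Pclass_min {U : Finset V} {u w : V} (hu : u ∈ Pclass G σ U) (hw : w ∈ U) :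
    hashAt G σ U u ≤ hashAt G σ U w := by
  rw [Pclass, Finset.mem_filter] at hu
  exact hu.2 w hw

theorem Pclass_not_min (hσ : UmbrellaFree G σ) {U : Finset V} {u v : V}
    (hv : v ∈ U) (hvp : v ∉ Pclass G σ U) (hu : u ∈ Pclass G σ U) :
    hashAt G σ U u < hashAt G σ U v := by
  rw [Pclass, Finset.mem_filter] at hvp
  push_neg at hvp
  obtain ⟨w, hw, hlt⟩ := hvp hv
  exact lt_of_le_of_lt (Pclass_min G σ hu hw) hlt

/-- Each class is a clique. -/
theorem Pclass_clique (hσ : UmbrellaFree G σ) {U : Finset V} {u v : V}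
    (hu : u ∈ Pclass G σ U) (hv : v ∈ Pclass G σ U) (hne : u ≠ v) : G.Adj u v := by
  by_contra hna
  rcases lt_trichotomy (σ.symm u) (σ.symm v) with h | h | h
  · have hk := km1 G σ hσ (U := U) h hna
    have hle := Pclass_min G σ hu (Pclass_subset G σ U hv)
    omega
  · exact hne (σ.symm.injective h)
  · have hk := km1 G σ hσ (U := U) h (fun hA => hna hA.symm)
    have hle := Pclass_min G σ hv (Pclass_subset G σ U hu)
    omega

theorem Uset_succ (i : ℕ) : Uset G σ (i+1) = Uset G σ i \ Pclass G σ (Uset G σ i) := rfl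

theorem Uset_mono {i j : ℕ} (h : i ≤ j) : Uset G σ j ⊆ Uset G σ i := by
  induction j with
  | zero => have : i = 0 := by omega
            subst this; exact subset_rfl
  | succ j ih =>
    rcases Nat.lt_succ_iff_lt_or_eq.mp (Nat.lt_succ_of_le h) with h1 | rfl
    · exact subset_trans (by rw [Uset_succ]; exact Finset.sdiff_subset) (ih (by omega))
    · exact subset_rfl

theorem Pclass_nonempty {U : Finset V} (h : U.Nonempty) : (Pclass G σ U).Nonempty := by
  obtain ⟨v, hv, hmin⟩ := Finset.exists_min_image U (hashAt G σ U) h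
  exact ⟨v, Finset.mem_filter.mpr ⟨hv, hmin⟩⟩

theorem Uset_card_le (i : ℕ) : (Uset G σ i).card ≤ Fintype.card V - i := by
  induction i with
  | zero => simpa [Uset] using le_rfl
  | succ i ih =>
    by_cases h : (Uset G σ i).Nonempty
    · have hP := Pclass_nonempty G σ h
      rw [Uset_succ, Finset.card_sdiff_of_subset (Pclass_subset G σ _)]
      have h1 : 1 ≤ (Pclass G σ (Uset G σ i)).card := Finset.card_pos.mpr hP
      omega
    · rw [Finset.not_nonempty_iff_eq_empty] at h
      rw [Uset_succ, h]
      simp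

theorem Uset_empty_at : Uset G σ (Fintype.card V) = ∅ :=
  Finset.card_eq_zero.mp (by have := Uset_card_le G σ (Fintype.card V); omega)

theorem cls_ex (v : V) : ∃ i, v ∉ Uset G σ (i + 1) :=
  ⟨Fintype.card V, fun h => Finset.notMem_empty v
    (Uset_empty_at G σ ▸ Uset_mono G σ (Nat.le_succ _) h)⟩

/-- the index of the partition class containing `v`. -/
noncomputable def cls (v : V) : ℕ := Nat.find (cls_ex G σ v)

theorem cls_notMem (v : V) : v ∉ Uset G σ (cls G σ v + 1) := Nat.find_spec (cls_ex G σ v)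

theorem cls_mem (v : V) : v ∈ Uset G σ (cls G σ v) := by
  rcases h : cls G σ v with - | m
  · simp [Uset]
  · by_contra hmem
    have h' : Nat.find (cls_ex G σ v) = m + 1 := h
    exact Nat.find_min (cls_ex G σ v) (m := m) (by omega) hmem

theorem mem_Uset_iff {v : V} {i : ℕ} : v ∈ Uset G σ i ↔ i ≤ cls G σ v := by
  constructor
  · intro h
    by_contra hcon
    exact cls_notMem G σ v (Uset_mono G σ (by omega) h)
  · intro h
    exact Uset_mono G σ h (cls_mem G σ v)

theorem mem_Pclass_self (v : V) : v ∈ Pclass G σ (Uset G σ (cls G σ v)) := by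
  have h1 := cls_mem G σ v
  have h2 := cls_notMem G σ v
  rw [Uset_succ, Finset.mem_sdiff] at h2
  by_contra h3
  exact h2 ⟨h1, h3⟩

theorem mem_Pclass_iff {v : V} {i : ℕ} : v ∈ Pclass G σ (Uset G σ i) ↔ cls G σ v = i := by
  constructor
  · intro h
    have h1 : i ≤ cls G σ v := (mem_Uset_iff G σ).mp (Pclass_subset G σ _ h)
    have h2 : v ∉ Uset G σ (i + 1) := by
      rw [Uset_succ, Finset.mem_sdiff]
      rintro ⟨-, hcon⟩
      exact hcon h
    have h3 : ¬ (i + 1 ≤ cls G σ v) := fun hc => h2 ((mem_Uset_iff G σ).mpr hc)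
    omega
  · rintro rfl
    exact mem_Pclass_self G σ v

end Classes
section Invariant

open Finset

variable {V : Type*} [Fintype V] [DecidableEq V] (G : SimpleGraph V) [DecidableRel G.Adj]
  {n : ℕ} (σ : Fin n ≃ V) [Nonempty V]

/-- The main invariant: vertices are visited in nondecreasing class order. -/
theorem inv (hσ : UmbrellaFree G σ) :
    ∀ t k, t < k → k < n → cls G σ (seq G σ t) ≤ cls G σ (seq G σ k) := by
  by_contra hcon
  push_neg at hcon
  obtain ⟨t₀, k₀', ht₀, hk₀', hlt₀'⟩ := hcon
  classical
  have hex : ∃ t, ∃ k, t < k ∧ k < n ∧ cls G σ (seq G σ k) < cls G σ (seq G σ t) :=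
    ⟨t₀, k₀', ht₀, hk₀', hlt₀'⟩
  obtain ⟨k₀, htk₀, hk₀n, hlt₀⟩ := Nat.find_spec hex
  set t := Nat.find hex with hts
  have htn : t < n := lt_trans htk₀ hk₀n
  -- (a) no violation before t
  have ha : ∀ s, s < t → ∀ k, s < k → k < n →
      cls G σ (seq G σ s) ≤ cls G σ (seq G σ k) := by
    intro s hs k hsk hkn
    by_contra hc
    exact Nat.find_min hex hs ⟨k, hsk, hkn, by omega⟩
  -- c : the minimum class among unvisited vertices
  have hIcone : ((Finset.Ico t n).image (fun k => cls G σ (seq G σ k))).Nonempty :=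
    ⟨_, Finset.mem_image_of_mem _ (Finset.mem_Ico.mpr ⟨le_refl t, htn⟩)⟩
  set c := ((Finset.Ico t n).image (fun k => cls G σ (seq G σ k))).min' hIcone with hcdef
  have hc_le : ∀ k, t ≤ k → k < n → c ≤ cls G σ (seq G σ k) := fun k h1 h2 =>
    Finset.min'_le _ _ (Finset.mem_image_of_mem _ (Finset.mem_Ico.mpr ⟨h1, h2⟩))
  obtain ⟨khat, hkhat1, hkhat2, hkhatc⟩ :
      ∃ k, t ≤ k ∧ k < n ∧ cls G σ (seq G σ k) = c := by
    have hm := Finset.min'_mem _ hIcone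
    rw [Finset.mem_image] at hm
    obtain ⟨k, hk, hkc⟩ := hm
    rw [Finset.mem_Ico] at hk
    exact ⟨k, hk.1, hk.2, hkc⟩
  have hcx : c < cls G σ (seq G σ t) :=
    lt_of_le_of_lt (hc_le k₀ (le_of_lt htk₀) hk₀n) hlt₀
  have hxU : seq G σ t ∈ Uset G σ c := (mem_Uset_iff G σ).mpr (le_of_lt hcx)
  have hxP : seq G σ t ∉ Pclass G σ (Uset G σ c) := fun h => by
    have := (mem_Pclass_iff G σ).mp h; omega
  -- every vertex outside U is visited before t
  have hVU : ∀ w, w ∉ Uset G σ c → w ∈ Wt G σ t := by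
    intro w hw
    have hclsw : ¬ (c ≤ cls G σ w) := fun hcc => hw ((mem_Uset_iff G σ).mpr hcc)
    obtain ⟨s, hsn, rfl⟩ := seq_surj G σ w
    rcases Nat.lt_or_ge s t with h1 | h1
    · exact seq_mem G σ h1
    · exact absurd (hc_le s h1 hsn) hclsw
  -- every visited vertex of U is in P
  have hWU : ∀ w, w ∈ Wt G σ t → w ∈ Uset G σ c → w ∈ Pclass G σ (Uset G σ c) := by
    intro w hwW hwU
    obtain ⟨s, hst, rfl⟩ := (mem_Wt G σ).mp hwW
    have h1 : cls G σ (seq G σ s) ≤ c := by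
      have := ha s hst khat (by omega) hkhat2
      omega
    have h2 : c ≤ cls G σ (seq G σ s) := (mem_Uset_iff G σ).mp hwU
    exact (mem_Pclass_iff G σ).mpr (by omega)
  set Q := Wt G σ t ∩ Pclass G σ (Uset G σ c) with hQdef
  have hQP : Q ⊆ Pclass G σ (Uset G σ c) := Finset.inter_subset_right
  have hQW : Q ⊆ Wt G σ t := Finset.inter_subset_left
  have hWdecomp : Wt G σ t = (Finset.univ \ Uset G σ c) ∪ Q := by
    ext w
    simp only [Finset.mem_union, Finset.mem_sdiff, Finset.mem_univ, true_and, hQdef,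
      Finset.mem_inter]
    constructor
    · intro hw
      by_cases hwU : w ∈ Uset G σ c
      · exact Or.inr ⟨hw, hWU w hw hwU⟩
      · exact Or.inl hwU
    · rintro (hw | ⟨hw, -⟩)
      · exact hVU w hw
      · exact hw
  have hdisjUQ : Disjoint (Finset.univ \ Uset G σ c) Q := by
    rw [Finset.disjoint_left]
    intro w hw hwQ
    exact (Finset.mem_sdiff.mp hw).2 (Pclass_subset G σ _ (hQP hwQ))
  -- tu : first time a vertex of P \ (visited) is visited
  have texists : ∃ k, k < n ∧ t ≤ k ∧ seq G σ k ∈ Pclass G σ (Uset G σ c) ∧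
      seq G σ k ∉ Wt G σ t := by
    refine ⟨khat, hkhat2, hkhat1, (mem_Pclass_iff G σ).mpr hkhatc, fun hmem => ?_⟩
    obtain ⟨s, hst, heq⟩ := (mem_Wt G σ).mp hmem
    have := seq_injOn G σ (by omega) hkhat2 heq
    omega
  obtain ⟨htun, httu, huP, huW⟩ := Nat.find_spec texists
  set tu := Nat.find texists with htudef
  have httu' : t < tu := by
    rcases Nat.lt_or_ge t tu with h1 | h1
    · exact h1
    · exfalso
      have heq : tu = t := by omega
      rw [heq] at huP
      exact hxP huP
  -- D : vertices visited in [t, tu)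
  have hWtu : Wt G σ tu = Wt G σ t ∪ (Finset.Ico t tu).image (seq G σ) := by
    ext w
    simp only [Finset.mem_union, Finset.mem_image, Finset.mem_Ico]
    rw [mem_Wt, mem_Wt]
    constructor
    · rintro ⟨s, hs, rfl⟩
      rcases Nat.lt_or_ge s t with h1 | h1
      · exact Or.inl ⟨s, h1, rfl⟩
      · exact Or.inr ⟨s, ⟨h1, hs⟩, rfl⟩
    · rintro (⟨s, hs, rfl⟩ | ⟨s, ⟨h1, h2⟩, rfl⟩)
      · exact ⟨s, by omega, rfl⟩
      · exact ⟨s, h2, rfl⟩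
  have hdisjWD : Disjoint (Wt G σ t) ((Finset.Ico t tu).image (seq G σ)) := by
    rw [Finset.disjoint_right]
    intro w hwD hwW
    rw [Finset.mem_image] at hwD
    obtain ⟨s, hs, rfl⟩ := hwD
    rw [Finset.mem_Ico] at hs
    obtain ⟨s', hs', heq⟩ := (mem_Wt G σ).mp hwW
    have := seq_injOn G σ (by omega) (by omega) heq
    omega
  have hDcard : ((Finset.Ico t tu).image (seq G σ)).card = tu - t := by
    rw [Finset.card_image_of_injOn, Nat.card_Ico]
    intro a haa b hbb hab
    rw [Finset.mem_coe, Finset.mem_Ico] at haa hbb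
    exact seq_injOn G σ (by omega) (by omega) hab
  -- vertices of D are in U \ P, hence have strictly larger hash than u
  have hDUP : ∀ s, t ≤ s → s < tu → seq G σ s ∈ Uset G σ c ∧
      seq G σ s ∉ Pclass G σ (Uset G σ c) := by
    intro s h1 h2
    have hsU : seq G σ s ∈ Uset G σ c := (mem_Uset_iff G σ).mpr (hc_le s h1 (by omega))
    refine ⟨hsU, fun hsP => ?_⟩
    refine Nat.find_min texists h2 ⟨by omega, h1, hsP, fun hmem => ?_⟩
    obtain ⟨s', hs', heq⟩ := (mem_Wt G σ).mp hmem
    have := seq_injOn G σ (by omega) (by omega) heq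
    omega
  have huminD : ∀ s, t ≤ s → s < tu →
      hashAt G σ (Uset G σ c) (seq G σ tu) < hashAt G σ (Uset G σ c) (seq G σ s) := by
    intro s h1 h2
    obtain ⟨hsU, hsP⟩ := hDUP s h1 h2
    exact Pclass_not_min G σ hσ hsU hsP huP
  -- all of D is adjacent to u
  have hDadj : ∀ s, t ≤ s → s < tu → G.Adj (seq G σ s) (seq G σ tu) := by
    intro s h1 h2
    by_contra hna
    have hrev := rev G σ hσ s tu h2 htun hna
    have hk := km1 G σ hσ (U := Uset G σ c) hrev (fun hA => hna hA.symm)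
    have := huminD s h1 h2
    omega
  -- all of Q is adjacent to u
  have hQadj : ∀ q ∈ Q, G.Adj q (seq G σ tu) := by
    intro q hq
    refine Pclass_clique G σ hσ (hQP hq) huP (fun heq => ?_)
    exact huW (heq ▸ hQW hq)
  -- identity at tu
  have hIDu := id_card G σ hσ htun
  have hQf : Q.filter (fun w => G.Adj (seq G σ tu) w) = Q :=
    Finset.filter_true_of_mem (fun q hq => (hQadj q hq).symm)
  have hDf : ((Finset.Ico t tu).image (seq G σ)).filter (fun w => G.Adj (seq G σ tu) w) =
      (Finset.Ico t tu).image (seq G σ) := by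
    refine Finset.filter_true_of_mem ?_
    intro d hd
    rw [Finset.mem_image] at hd
    obtain ⟨s, hs, rfl⟩ := hd
    rw [Finset.mem_Ico] at hs
    exact (hDadj s hs.1 hs.2).symm
  have hfilter : (Wt G σ tu).filter (fun w => G.Adj (seq G σ tu) w) =
      (((Finset.univ \ Uset G σ c).filter (fun w => G.Adj (seq G σ tu) w)) ∪ Q) ∪
        (Finset.Ico t tu).image (seq G σ) := by
    rw [hWtu, hWdecomp, Finset.filter_union, Finset.filter_union, hQf, hDf]
  have hsubWt : ((Finset.univ \ Uset G σ c).filter (fun w => G.Adj (seq G σ tu) w)) ∪ Q ⊆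
      Wt G σ t := by
    intro w hw
    rcases Finset.mem_union.mp hw with h1 | h1
    · exact hVU w (Finset.mem_sdiff.mp (Finset.mem_filter.mp h1).1).2
    · exact hQW h1
  have hcardTot : ((Wt G σ tu).filter (fun w => G.Adj (seq G σ tu) w)).card =
      ((Finset.univ \ Uset G σ c).filter (fun w => G.Adj (seq G σ tu) w)).card +
        Q.card + (tu - t) := by
    rw [hfilter, Finset.card_union_of_disjoint (Finset.disjoint_of_subset_left hsubWt hdisjWD),
      Finset.card_union_of_disjoint
        (Finset.disjoint_of_subset_left (Finset.filter_subset _ _) hdisjUQ), hDcard]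
  have hAeq : ∀ y : V, (Finset.univ \ Uset G σ c).filter (fun w => G.Adj y w) =
      Finset.univ.filter (fun z => z ∉ Uset G σ c ∧ G.Adj y z) := by
    intro y
    ext w
    simp only [Finset.mem_filter, Finset.mem_sdiff, Finset.mem_univ, true_and]
  have hcard2 : tu = t + (tu - t) := by omega
  have hcardWtu : (Wt G σ tu).card = tu := card_Wt G σ (le_of_lt htun)
  have hcardsplit : tu = t + (tu - t) ∧
      (Wt G σ t).card + ((Finset.Ico t tu).image (seq G σ)).card = tu := by
    constructor
    · omega
    · rw [← Finset.card_union_of_disjoint hdisjWD, ← hWtu, hcardWtu]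
  have hEq1 : t = hashAt G σ (Uset G σ c) (seq G σ tu) + Q.card := by
    have h1 : tu = hashAt G σ (Uset G σ c) (seq G σ tu) + Q.card + (tu - t) := by
      rw [hashAt, ← hAeq]
      omega
    omega
  -- identity at t
  have hIDx := id_card G σ hσ htn
  have hfilter2 : (Wt G σ t).filter (fun w => G.Adj (seq G σ t) w) =
      ((Finset.univ \ Uset G σ c).filter (fun w => G.Adj (seq G σ t) w)) ∪
        (Q.filter (fun w => G.Adj (seq G σ t) w)) := by
    rw [hWdecomp, Finset.filter_union]
  have hEq2 : t = hashAt G σ (Uset G σ c) (seq G σ t) +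
      (Q.filter (fun w => G.Adj (seq G σ t) w)).card := by
    have h1 : ((Wt G σ t).filter (fun w => G.Adj (seq G σ t) w)).card =
        ((Finset.univ \ Uset G σ c).filter (fun w => G.Adj (seq G σ t) w)).card +
          (Q.filter (fun w => G.Adj (seq G σ t) w)).card := by
      rw [hfilter2, Finset.card_union_of_disjoint
        (Finset.disjoint_of_subset_left (Finset.filter_subset _ _)
          (Finset.disjoint_of_subset_right (Finset.filter_subset _ _) hdisjUQ))]
    rw [hashAt, ← hAeq]
    omega
  have hxhash : hashAt G σ (Uset G σ c) (seq G σ tu) < hashAt G σ (Uset G σ c) (seq G σ t) :=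
    Pclass_not_min G σ hσ hxU hxP huP
  clear_value t tu c Q
  have hcomb : hashAt G σ (Uset G σ c) (seq G σ tu) + Q.card =
      hashAt G σ (Uset G σ c) (seq G σ t) +
        (Q.filter (fun w => G.Adj (seq G σ t) w)).card := hEq1.symm.trans hEq2
  have hQlt : (Q.filter (fun w => G.Adj (seq G σ t) w)).card < Q.card := by
    revert hcomb hxhash
    intro h1 h2
    linarith
  -- find a non-neighbour of x in Q
  have hqex : ∃ q ∈ Q, ¬ G.Adj (seq G σ t) q := by
    by_contra hq
    push_neg at hq
    have heq : Q.filter (fun w => G.Adj (seq G σ t) w) = Q := Finset.filter_true_of_mem hq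
    rw [heq] at hQlt
    exact lt_irrefl _ hQlt
  obtain ⟨q, hqQ, hqna⟩ := hqex
  obtain ⟨sq, hsq, rfl⟩ := (mem_Wt G σ).mp (hQW hqQ)
  -- apply the beats lemma
  have hune : seq G σ tu ≠ seq G σ t := fun h => by
    have := seq_injOn G σ htun htn h; omega
  obtain ⟨s', hss', hs't, hadj', hnadj'⟩ :=
    beats G σ htn huW hune hsq (hQadj _ hqQ) (fun h => hqna h.symm)
  -- the witness lies in an earlier class, contradiction
  have hd'Q : seq G σ s' ∉ Q := fun hmem => hnadj' (hQadj _ hmem)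
  have hd'W : seq G σ s' ∈ Wt G σ t := seq_mem G σ hs't
  have hd'U : seq G σ s' ∉ Uset G σ c := by
    rw [hWdecomp, Finset.mem_union] at hd'W
    rcases hd'W with h1 | h1
    · exact (Finset.mem_sdiff.mp h1).2
    · exact absurd h1 hd'Q
  have hclsd : ¬ (c ≤ cls G σ (seq G σ s')) := fun hcc => hd'U ((mem_Uset_iff G σ).mpr hcc)
  have hclsq : cls G σ (seq G σ sq) = c := (mem_Pclass_iff G σ).mp (hQP hqQ)
  have hfin := ha sq (by omega) s' hss' (by omega)
  omega

end Invariant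
/-- Given an umbrella-free ordering `σ` of a cocomparability graph `G`, there exists an
ordering `τ` (a `LexDFS⁺(σ)` ordering) such that: (i) `τ` satisfies the LexDFS 4-point
condition; (ii) `τ` is umbrella-free; (iii) `τ` respects the order of the partition
classes; and (iv) within a class, ties — vertices whose neighbourhoods in the earlier
classes coincide — are broken in reverse `σ` order.  In particular the first vertex of
`τ` is the last vertex of `σ`. -/
theorem exists_lexdfs_plus_ordering {V : Type*} [Fintype V] [DecidableEq V]
    (G : SimpleGraph V) [DecidableRel G.Adj] {n : ℕ} (σ : Fin n ≃ V)
    (hσ : UmbrellaFree G σ) :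
    ∃ τ : Fin n ≃ V, FourPointLexDFS G τ ∧ UmbrellaFree G τ ∧
      (∀ i j : ℕ, i < j → ∀ x ∈ Pclass G σ (Uset G σ i),
        ∀ y ∈ Pclass G σ (Uset G σ j), τ.symm x < τ.symm y) ∧
      (∀ i : ℕ, ∀ u ∈ Pclass G σ (Uset G σ i), ∀ v ∈ Pclass G σ (Uset G σ i),
        Finset.univ.filter (fun z => z ∉ Uset G σ i ∧ G.Adj u z) =
          Finset.univ.filter (fun z => z ∉ Uset G σ i ∧ G.Adj v z) →
        σ.symm u < σ.symm v → τ.symm v < τ.symm u) ∧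
      (∀ h : 0 < n, τ ⟨0, h⟩ = σ ⟨n - 1, Nat.sub_lt h Nat.one_pos⟩) := by
  rcases Nat.eq_zero_or_pos n with rfl | hn
  · refine ⟨σ, ?_, ?_, ?_, ?_, ?_⟩
    · intro i; exact i.elim0
    · intro i; exact i.elim0
    · intro i j hij x hx; exact (σ.symm x).elim0
    · intro i u hu; exact (σ.symm u).elim0
    · intro h; omega
  · haveI : Nonempty V := ⟨σ ⟨0, hn⟩⟩
    have hbij : Function.Bijective (fun i : Fin n => seq G σ (i : ℕ)) := by
      rw [Fintype.bijective_iff_injective_and_card]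
      refine ⟨fun a b hab => Fin.ext (seq_injOn G σ a.isLt b.isLt hab), ?_⟩
      rw [Fintype.card_fin]
      exact (card_V' σ).symm
    have hτs : ∀ x : V, seq G σ (((Equiv.ofBijective _ hbij).symm x : Fin n) : ℕ) = x :=
      fun x => (Equiv.ofBijective _ hbij).apply_symm_apply x
    refine ⟨Equiv.ofBijective _ hbij, ?_, ?_, ?_, ?_, ?_⟩
    -- (i) four point condition
    · intro i j k hij hjk hadj hnadj
      obtain ⟨d, hd1, hd2, hd3, hd4⟩ := seq_fourpoint G σ (show (i : ℕ) < (j : ℕ) from hij)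
        (show (j : ℕ) < (k : ℕ) from hjk) k.isLt hadj hnadj
      exact ⟨⟨d, by omega⟩, hd1, hd2, hd3, hd4⟩
    -- (ii) umbrella free
    · intro i j k hij hjk hadj
      exact seq_umbrella G σ hσ (show (i : ℕ) < (j : ℕ) from hij)
        (show (j : ℕ) < (k : ℕ) from hjk) k.isLt hadj
    -- (iii) class order
    · intro i j hij x hx y hy
      have hci := (mem_Pclass_iff G σ).mp hx
      have hcj := (mem_Pclass_iff G σ).mp hy
      by_contra hcon
      push_neg at hcon
      have hxy : x ≠ y := fun h => by rw [h, hcj] at hci; omega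
      have hne : (Equiv.ofBijective _ hbij).symm y ≠ (Equiv.ofBijective _ hbij).symm x :=
        fun h => hxy (((Equiv.ofBijective _ hbij).symm.injective h).symm)
      have hlt : (((Equiv.ofBijective _ hbij).symm y : Fin n) : ℕ) <
          (((Equiv.ofBijective _ hbij).symm x : Fin n) : ℕ) :=
        lt_of_le_of_ne hcon (fun h => hne (Fin.ext h))
      have hinv := inv G σ hσ _ _ hlt ((Equiv.ofBijective _ hbij).symm x).isLt
      rw [hτs, hτs] at hinv
      omega
    -- (iv) tie break
    · intro i u hu v hv heq hlt
      by_contra hcon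
      push_neg at hcon
      have hne : u ≠ v := fun h => by rw [h] at hlt; exact lt_irrefl _ hlt
      have hnes : (Equiv.ofBijective _ hbij).symm u ≠ (Equiv.ofBijective _ hbij).symm v :=
        fun h => hne ((Equiv.ofBijective _ hbij).symm.injective h)
      have hlt2 : (((Equiv.ofBijective _ hbij).symm u : Fin n) : ℕ) <
          (((Equiv.ofBijective _ hbij).symm v : Fin n) : ℕ) :=
        lt_of_le_of_ne hcon (fun h => hnes (Fin.ext h))
      have htun : (((Equiv.ofBijective _ hbij).symm u : Fin n) : ℕ) < n :=
        ((Equiv.ofBijective _ hbij).symm u).isLt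
      have hsequ := hτs u
      have hseqv := hτs v
      have hvW : v ∉ Wt G σ (((Equiv.ofBijective _ hbij).symm u : Fin n) : ℕ) := by
        intro hmem
        obtain ⟨s, hs, hseq⟩ := (mem_Wt G σ).mp hmem
        have := seq_injOn G σ (by omega) ((Equiv.ofBijective _ hbij).symm v).isLt
          (hseq.trans hseqv.symm)
        omega
      have hvne : v ≠ seq G σ (((Equiv.ofBijective _ hbij).symm u : Fin n) : ℕ) := by
        rw [hsequ]; exact hne.symm
      rcases dich G σ htun hvW hvne with ⟨s, hs, hadj, hnadj⟩ | ⟨-, hlt3⟩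
      · rw [hsequ] at hadj
        have hclsu : cls G σ u = i := (mem_Pclass_iff G σ).mp hu
        have hcls := inv G σ hσ s _ hs htun
        rw [hsequ] at hcls
        rcases lt_or_eq_of_le hcls with hcase | hcase
        · -- earlier class: use equal neighbourhoods
          have hdU : seq G σ s ∉ Uset G σ i := fun hmem => by
            have := (mem_Uset_iff G σ).mp hmem; omega
          have hdmem : seq G σ s ∈ Finset.univ.filter
              (fun z => z ∉ Uset G σ i ∧ G.Adj u z) :=
            Finset.mem_filter.mpr ⟨Finset.mem_univ _, hdU, hadj.symm⟩
          rw [heq] at hdmem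
          exact hnadj ((Finset.mem_filter.mp hdmem).2.2.symm
            )
        · -- same class: use clique property
          have hdP : seq G σ s ∈ Pclass G σ (Uset G σ i) :=
            (mem_Pclass_iff G σ).mpr (by omega)
          have hdv : seq G σ s ≠ v := fun h => by
            have := seq_injOn G σ (by omega) ((Equiv.ofBijective _ hbij).symm v).isLt
              (h.trans hseqv.symm)
            omega
          exact hnadj (Pclass_clique G σ hσ hdP hv hdv)
      · rw [hsequ] at hlt3
        have : ((σ.symm u : Fin n) : ℕ) < ((σ.symm v : Fin n) : ℕ) := hlt
        omega
    -- (v) first vertex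
    · intro h
      show seq G σ 0 = σ ⟨n - 1, Nat.sub_lt h Nat.one_pos⟩
      by_contra hne
      have hu : σ ⟨n - 1, Nat.sub_lt h Nat.one_pos⟩ ∉ Wt G σ 0 := by
        intro hmem
        obtain ⟨s, hs, -⟩ := (mem_Wt G σ).mp hmem
        omega
      have hne' : σ ⟨n - 1, Nat.sub_lt h Nat.one_pos⟩ ≠ seq G σ 0 :=
        fun h2 => hne h2.symm
      rcases dich G σ hn hu hne' with ⟨s, hs, -, -⟩ | ⟨-, hlt3⟩
      · omega
      · rw [Equiv.symm_apply_apply] at hlt3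
        have h2 := (σ.symm (seq G σ 0)).isLt
        simp only at hlt3
        omega
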